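/- arXiv:math/0108031 — 8 statements merged into one kernel-verified Lean document; each statement's English description precedes it below -/
import Mathlib

section
/- Let K be a field whose characteristic does not divide n·a_1·...·a_n·(a_1+...+a_n), let x_1,...,x_n ∈ K^* be pairwise distinct, and set β(X) = ∏_{i=1}^n (1-x_i X)^{a_i}. If ∑_{i=1}^n a_i x_i^m = 0 in K for all m ∈ {1,...,n-1}, then the X-adic valuation of β'(X)/β(X) (as an element of K[[X]]) is at least n-1; equivalently, X^{n-1} divides β'(X) in K[X]. -/
open Finset Polynomial

private lemma derivative_finset_prod' {ι R : Type*} [CommSemiring R] [DecidableEq ι]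
    (s : Finset ι) (f : ι → R[X]) :
    derivative (∏ i ∈ s, f i) = ∑ i ∈ s, (∏ j ∈ s.erase i, f j) * derivative (f i) := by
  induction s using Finset.induction_on with
  | empty => simp
  | @insert b s hb ih =>
    rw [Finset.prod_insert hb, derivative_mul, ih, Finset.sum_insert hb,
      Finset.erase_insert hb, Finset.mul_sum]
    congr 1
    · exact mul_comm _ _
    · refine Finset.sum_congr rfl fun i hi => ?_
      rw [Finset.erase_insert_of_ne (by rintro rfl; exact hb hi),
        Finset.prod_insert (fun hmem => hb (Finset.mem_of_mem_erase hmem)), mul_assoc]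

/-- If `char K` does not divide `n·a₁⋯aₙ·(a₁+⋯+aₙ)`, the `xᵢ` are pairwise distinct
and nonzero, and `∑ᵢ aᵢ xᵢ^m = 0` for `m = 1, …, n-1`, then `X^{n-1}` divides the
derivative of `β(X) = ∏ᵢ (1 - xᵢ X)^{aᵢ}` in `K[X]` (equivalently, the `X`-adic
valuation of `β'/β` in `K⟦X⟧` is at least `n-1`). -/
theorem stmt3 {K : Type*} [Field K] (n : ℕ)
    (a : Fin n → ℕ) (ha : ∀ i, 0 < a i)
    (hchar : ((n * (∏ i, a i) * ∑ i, a i : ℕ) : K) ≠ 0)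
    (x : Fin n → K) (hx : ∀ i, x i ≠ 0) (hx' : Function.Injective x)
    (β : K[X]) (hβ : β = ∏ i, (1 - C (x i) * X) ^ a i)
    (hsum : ∀ m ∈ Finset.Icc 1 (n - 1), ∑ i, (a i : K) * x i ^ m = 0) :
    X ^ (n - 1) ∣ derivative β := by
  classical
  set Q : K[X] := ∏ i, (1 - C (x i) * X) with hQ
  set Qe : Fin n → K[X] := fun i => ∏ j ∈ univ.erase i, (1 - C (x j) * X) with hQe
  set P : K[X] := ∏ i, (1 - C (x i) * X) ^ (a i - 1) with hP
  set S : K[X] := ∑ i, C ((a i : K) * x i) * Qe i with hS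
  -- coefficient of (1 - C c * X) * p
  have hmc : ∀ (c : K) (p : K[X]) (m : ℕ),
      ((1 - C c * X) * p).coeff (m + 1) = p.coeff (m + 1) - c * p.coeff m := by
    intro c p m
    rw [sub_mul, one_mul, coeff_sub, mul_assoc, coeff_C_mul, coeff_X_mul]
  have hmc0 : ∀ (c : K) (p : K[X]), ((1 - C c * X) * p).coeff 0 = p.coeff 0 := by
    intro c p
    simp [mul_coeff_zero]
  have hfac : ∀ i : Fin n, Q = (1 - C (x i) * X) * Qe i := fun i =>
    (Finset.mul_prod_erase univ _ (mem_univ i)).symm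
  -- coefficient formula for Qe i
  have hQic : ∀ (i : Fin n) (m : ℕ),
      (Qe i).coeff m = ∑ k ∈ range (m + 1), x i ^ k * Q.coeff (m - k) := by
    intro i m
    induction m with
    | zero =>
      have := hmc0 (x i) (Qe i)
      rw [← hfac i] at this
      simp [← this]
    | succ m ih =>
      have h := hmc (x i) (Qe i) m
      rw [← hfac i] at h
      have : (Qe i).coeff (m + 1) = Q.coeff (m + 1) + x i * (Qe i).coeff m := by
        linear_combination -h
      rw [this, ih,
        Finset.sum_range_succ' (fun k => x i ^ k * Q.coeff (m + 1 - k)) (m + 1)]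
      simp only [Nat.succ_sub_succ, pow_zero, one_mul, Nat.sub_zero]
      have hms : x i * ∑ k ∈ range (m + 1), x i ^ k * Q.coeff (m - k)
          = ∑ k ∈ range (m + 1), x i ^ (k + 1) * Q.coeff (m - k) := by
        rw [Finset.mul_sum]
        exact Finset.sum_congr rfl fun k _ => by ring
      rw [hms]
      ring
  -- low coefficients of S vanish
  have hScoeff : ∀ m, m < n - 1 → S.coeff m = 0 := by
    intro m hm
    rw [hS, finset_sum_coeff]
    simp only [coeff_C_mul, hQic]
    calc ∑ i : Fin n, (a i : K) * x i * ∑ k ∈ range (m + 1), x i ^ k * Q.coeff (m - k)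
        = ∑ i : Fin n, ∑ k ∈ range (m + 1),
            (a i : K) * x i * (x i ^ k * Q.coeff (m - k)) := by
          exact Finset.sum_congr rfl fun i _ => Finset.mul_sum _ _ _
      _ = ∑ k ∈ range (m + 1), ∑ i : Fin n,
            (a i : K) * x i * (x i ^ k * Q.coeff (m - k)) := Finset.sum_comm
      _ = 0 := by
          apply Finset.sum_eq_zero
          intro k hk
          have hk1 : k + 1 ∈ Finset.Icc 1 (n - 1) := by
            simp only [Finset.mem_range] at hk
            simp only [Finset.mem_Icc]
            omega
          have h0 := hsum (k + 1) hk1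
          calc ∑ i : Fin n, (a i : K) * x i * (x i ^ k * Q.coeff (m - k))
              = Q.coeff (m - k) * ∑ i : Fin n, (a i : K) * x i ^ (k + 1) := by
                rw [Finset.mul_sum]; exact Finset.sum_congr rfl fun i _ => by ring
            _ = 0 := by rw [h0, mul_zero]
  have hSdvd : X ^ (n - 1) ∣ S := by
    rw [Polynomial.X_pow_dvd_iff]
    exact hScoeff
  -- derivative formula
  have hder : derivative β = -(P * S) := by
    rw [hβ, derivative_finset_prod']
    rw [hS, Finset.mul_sum, ← Finset.sum_neg_distrib]
    apply Finset.sum_congr rfl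
    intro i _
    rw [derivative_pow]
    have hd1 : derivative (1 - C (x i) * X) = -C (x i) := by
      simp
    rw [hd1]
    have hsplit : ∀ j : Fin n, (1 - C (x j) * X) ^ a j
        = (1 - C (x j) * X) ^ (a j - 1) * (1 - C (x j) * X) := by
      intro j
      rw [← pow_succ]
      congr 1
      have := ha j
      omega
    have hprodsplit : (∏ j ∈ univ.erase i, (1 - C (x j) * X) ^ a j)
        = (∏ j ∈ univ.erase i, (1 - C (x j) * X) ^ (a j - 1)) * Qe i := by
      rw [hQe]
      rw [← Finset.prod_mul_distrib]
      exact Finset.prod_congr rfl fun j _ => hsplit j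
    rw [hprodsplit]
    have hPsplit : P = (1 - C (x i) * X) ^ (a i - 1)
        * ∏ j ∈ univ.erase i, (1 - C (x j) * X) ^ (a j - 1) := by
      rw [hP]
      exact (Finset.mul_prod_erase univ _ (mem_univ i)).symm
    rw [hPsplit, C_mul]
    ring
  rw [hder]
  exact (hSdvd.mul_left P).neg_right
end

section
/- Let K be a field, n a positive integer, x_1,...,x_n ∈ K^* pairwise distinct, and a_1,...,a_n elements of K. Suppose that for each i ∈ {1,...,n}, a_i ∏_{j≠i} (x_j - x_i) = (a_1+...+a_n) ∏_{j≠i} x_j. Then ∑_{i=1}^n a_i x_i^m = 0 for all m ∈ {1,...,n-1}. -/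
open Finset

/-- If `aᵢ ∏_{j≠i} (xⱼ - xᵢ) = (a₁+⋯+aₙ) ∏_{j≠i} xⱼ` for each `i`, with the `xᵢ`
pairwise distinct and nonzero, then `∑ᵢ aᵢ xᵢ^m = 0` for all `m = 1, …, n-1`. -/
theorem stmt4 {K : Type*} [Field K] (n : ℕ) (hn : 0 < n)
    (x : Fin n → K) (hx : ∀ i, x i ≠ 0) (hx' : Function.Injective x)
    (a : Fin n → K)
    (h : ∀ i, a i * ∏ j ∈ univ.erase i, (x j - x i) =
      (∑ j, a j) * ∏ j ∈ univ.erase i, x j) :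
    ∀ m ∈ Finset.Icc 1 (n - 1), ∑ i, a i * x i ^ m = 0 := by
  intro m hm
  rw [mem_Icc] at hm
  have hinj : Set.InjOn x ↑(univ : Finset (Fin n)) := hx'.injOn
  have hdeg : (Polynomial.X ^ m : Polynomial K).degree < #(univ : Finset (Fin n)) := by
    rw [Polynomial.degree_X_pow, card_univ, Fintype.card_fin]
    exact_mod_cast lt_of_le_of_lt hm.2 (Nat.sub_lt hn one_pos)
  have h0 := congrArg (Polynomial.eval 0)
    (Lagrange.eq_interpolate (f := Polynomial.X ^ m) hinj hdeg)
  simp only [Lagrange.interpolate_apply, Lagrange.basis, Lagrange.basisDivisor,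
    Polynomial.eval_finset_sum, Polynomial.eval_mul, Polynomial.eval_C,
    Polynomial.eval_prod, Polynomial.eval_sub, Polynomial.eval_X,
    Polynomial.eval_pow, zero_pow (Nat.one_le_iff_ne_zero.mp hm.1)] at h0
  -- h0 : ∑ i, (x i)^m * ∏ j ∈ erase univ i, ((x i - x j)⁻¹ * (0 - x j)) = 0
  have key : ∀ i : Fin n, a i * x i ^ m =
      (∑ j, a j) * (x i ^ m * ∏ j ∈ univ.erase i, ((x i - x j)⁻¹ * (0 - x j))) := by
    intro i
    have hne : ∏ j ∈ univ.erase i, (x j - x i) ≠ 0 := by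
      refine prod_ne_zero_iff.mpr fun j hj => sub_ne_zero_of_ne ?_
      exact fun hxx => (mem_erase.mp hj).1 (hx' hxx)
    have ha : a i = (∑ j, a j) * (∏ j ∈ univ.erase i, x j) *
        (∏ j ∈ univ.erase i, (x j - x i))⁻¹ := by
      field_simp
      linear_combination h i
    have hprod : ∏ j ∈ univ.erase i, ((x i - x j)⁻¹ * (0 - x j)) =
        (∏ j ∈ univ.erase i, x j) * (∏ j ∈ univ.erase i, (x j - x i))⁻¹ := by
      rw [← prod_inv_distrib, ← prod_mul_distrib]
      refine prod_congr rfl fun j hj => ?_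
      rw [zero_sub, ← neg_sub (x j) (x i), inv_neg, neg_mul, mul_comm, neg_mul, neg_neg]
    rw [ha, hprod]; ring
  calc ∑ i, a i * x i ^ m
      = ∑ i, (∑ j, a j) * (x i ^ m * ∏ j ∈ univ.erase i, ((x i - x j)⁻¹ * (0 - x j))) :=
        sum_congr rfl fun i _ => key i
    _ = (∑ j, a j) * ∑ i, x i ^ m * ∏ j ∈ univ.erase i, ((x i - x j)⁻¹ * (0 - x j)) := by
        rw [mul_sum]
    _ = 0 := by rw [h0.symm, mul_zero]
end

section
/- Let K be a field, n a positive integer with (n-1)! invertible in K (e.g. char K = 0 or char K > n-1), x_1,...,x_n ∈ K^* pairwise distinct, and a_1,...,a_n ∈ K^* with a_1+...+a_n ≠ 0. If ∑_{i=1}^n a_i x_i^m = 0 for all m ∈ {1,...,n-1}, then for each i, a_i ∏_{j≠i} (x_j - x_i) = (a_1+...+a_n) ∏_{j≠i} x_j. -/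
open Finset Polynomial

lemma prod_neg_aux {K : Type*} [CommRing K] {ι : Type*} (s : Finset ι) (f : ι → K) :
    ∏ k ∈ s, (-f k) = (-1)^s.card * ∏ k ∈ s, f k := by
  rw [Finset.prod_congr rfl (fun k _ => (neg_one_mul (f k)).symm),
    Finset.prod_mul_distrib, Finset.prod_const]

/-- Converse: if `(n-1)!` is invertible in `K`, the `xᵢ` are pairwise distinct and
nonzero, the `aᵢ` are nonzero with `a₁+⋯+aₙ ≠ 0`, and `∑ᵢ aᵢ xᵢ^m = 0` for
`m = 1, …, n-1`, then `aᵢ ∏_{j≠i} (xⱼ - xᵢ) = (a₁+⋯+aₙ) ∏_{j≠i} xⱼ` for each `i`. -/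
theorem stmt5 {K : Type*} [Field K] (n : ℕ) (hn : 0 < n)
    (hfac : IsUnit (((n - 1).factorial : K)))
    (x : Fin n → K) (hx : ∀ i, x i ≠ 0) (hx' : Function.Injective x)
    (a : Fin n → K) (ha : ∀ i, a i ≠ 0) (hN : (∑ j, a j) ≠ 0)
    (hsum : ∀ m ∈ Finset.Icc 1 (n - 1), ∑ i, a i * x i ^ m = 0) :
    ∀ i, a i * ∏ j ∈ univ.erase i, (x j - x i) =
      (∑ j, a j) * ∏ j ∈ univ.erase i, x j := by
  classical
  intro i
  set Fj : Fin n → K[X] := fun j => ∏ k ∈ univ.erase j, (X - C (x k)) with hFj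
  set F : K[X] := ∑ j, C (a j * x j) * Fj j with hF
  have hcard : ∀ j : Fin n, (univ.erase j).card = n - 1 := by
    intro j; rw [Finset.card_erase_of_mem (mem_univ j)]; simp
  have hdegFj : ∀ j : Fin n, (Fj j).natDegree = n - 1 := by
    intro j
    rw [hFj]
    rw [Polynomial.natDegree_prod _ _ (fun k _ => X_sub_C_ne_zero (x k))]
    simp [hcard j]
  have hP : ∀ j : Fin n, (X - C (x j)) * Fj j = ∏ k, (X - C (x k)) := by
    intro j
    rw [hFj, ← Finset.mul_prod_erase univ _ (mem_univ j)]
  have key : ∀ m : ℕ, m ≤ n - 1 →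
      (X : K[X])^m * F = ∑ j, C (a j * x j ^ (m+1)) * Fj j := by
    intro m
    induction m with
    | zero => intro _; simp [hF]
    | succ m ih =>
      intro hm
      have hm' : m ≤ n - 1 := by omega
      have h1 : m + 1 ∈ Finset.Icc 1 (n-1) := by simp; omega
      have hzero : (∑ j, a j * x j ^ (m+1)) = 0 := hsum _ h1
      calc (X:K[X])^(m+1) * F = X * ((X:K[X])^m * F) := by ring
        _ = X * ∑ j, C (a j * x j ^ (m+1)) * Fj j := by rw [ih hm']
        _ = ∑ j, C (a j * x j ^ (m+1)) * ((X - C (x j)) * Fj j)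
            + ∑ j, C (a j * x j ^ (m+1+1)) * Fj j := by
              rw [Finset.mul_sum, ← Finset.sum_add_distrib]
              refine Finset.sum_congr rfl fun j _ => ?_
              have : C (a j * x j ^ (m+1+1)) = C (a j * x j ^ (m+1)) * C (x j) := by
                rw [← C_mul]; ring_nf
              rw [this]; ring
        _ = ∑ j, C (a j * x j ^ (m+1+1)) * Fj j := by
              have : ∑ j, C (a j * x j ^ (m+1)) * ((X - C (x j)) * Fj j) = 0 := by
                calc ∑ j, C (a j * x j ^ (m+1)) * ((X - C (x j)) * Fj j)
                    = (∑ j, C (a j * x j ^ (m+1))) * ∏ k, (X - C (x k)) := by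
                      rw [Finset.sum_mul]
                      exact Finset.sum_congr rfl fun j _ => by rw [hP j]
                  _ = 0 := by rw [← map_sum C, hzero]; simp
              rw [this, zero_add]
  have hdeg : F.natDegree = 0 := by
    by_cases hF0 : F = 0
    · simp [hF0]
    · have h1 : ((X:K[X])^(n-1) * F).natDegree = (n-1) + F.natDegree := by
        rw [Polynomial.natDegree_mul (pow_ne_zero _ Polynomial.X_ne_zero) hF0, natDegree_X_pow]
      have h2 : ((X:K[X])^(n-1) * F).natDegree ≤ n - 1 := by
        rw [key (n-1) le_rfl]
        refine (Polynomial.natDegree_sum_le _ _).trans ?_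
        simp only [Finset.fold_max_le]
        constructor
        · omega
        · intro j _
          exact (Polynomial.natDegree_mul_le).trans
            (by rw [Polynomial.natDegree_C, hdegFj j]; omega)
      omega
  obtain ⟨c, hc⟩ := Polynomial.natDegree_eq_zero.mp hdeg
  have hevi : F.eval (x i) = a i * x i * ∏ k ∈ univ.erase i, (x i - x k) := by
    rw [hF, Polynomial.eval_finset_sum]
    rw [Finset.sum_eq_single i]
    · simp [hFj, Polynomial.eval_prod, mul_assoc]
    · intro j _ hj
      have : (Fj j).eval (x i) = 0 := by
        rw [hFj]
        simp only [Polynomial.eval_prod]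
        exact Finset.prod_eq_zero (Finset.mem_erase.mpr ⟨Ne.symm hj, mem_univ i⟩) (by simp)
      simp [this]
    · simp
  have hev0 : F.eval 0 = (-1)^(n-1) * (∏ k, x k) * (∑ j, a j) := by
    rw [hF, Polynomial.eval_finset_sum]
    have : ∀ j : Fin n, (Fj j).eval 0 = (-1)^(n-1) * ∏ k ∈ univ.erase j, x k := by
      intro j
      rw [hFj]
      simp only [Polynomial.eval_prod, Polynomial.eval_sub, Polynomial.eval_X,
        Polynomial.eval_C, zero_sub]
      rw [← hcard j, ← prod_neg_aux]
    calc ∑ j, (C (a j * x j) * Fj j).eval 0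
        = ∑ j, a j * ((-1)^(n-1) * (x j * ∏ k ∈ univ.erase j, x k)) := by
          refine Finset.sum_congr rfl fun j _ => ?_
          simp [this j]; ring
      _ = ∑ j, a j * ((-1)^(n-1) * ∏ k, x k) := by
          refine Finset.sum_congr rfl fun j _ => ?_
          rw [Finset.mul_prod_erase univ x (mem_univ j)]
      _ = (-1)^(n-1) * (∏ k, x k) * (∑ j, a j) := by
          rw [← Finset.sum_mul]; ring
  have hkey : a i * x i * ∏ k ∈ univ.erase i, (x i - x k)
      = (-1)^(n-1) * (∏ k, x k) * (∑ j, a j) := by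
    rw [← hevi, ← hev0, ← hc]; simp
  have hsign : ∏ j ∈ univ.erase i, (x j - x i) = (-1)^(n-1) * ∏ k ∈ univ.erase i, (x i - x k) := by
    rw [← hcard i, ← prod_neg_aux]
    exact Finset.prod_congr rfl fun j _ => by ring
  have hprodx : (∏ k, x k) = x i * ∏ k ∈ univ.erase i, x k :=
    (Finset.mul_prod_erase univ x (mem_univ i)).symm
  have hxi := hx i
  rw [hsign]
  rw [hprodx] at hkey
  have hs : ((-1:K)^(n-1)) * ((-1:K)^(n-1)) = 1 := by
    rw [← pow_add, ← two_mul, pow_mul]; simp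
  refine mul_left_cancel₀ hxi ?_
  calc x i * (a i * ((-1)^(n-1) * ∏ k ∈ univ.erase i, (x i - x k)))
      = (-1:K)^(n-1) * (a i * x i * ∏ k ∈ univ.erase i, (x i - x k)) := by ring
    _ = (-1:K)^(n-1) * (((-1:K)^(n-1) * (x i * ∏ k ∈ univ.erase i, x k)) * (∑ j, a j)) := by
        rw [hkey]
    _ = ((-1:K)^(n-1) * (-1:K)^(n-1)) * ((x i * ∏ k ∈ univ.erase i, x k) * (∑ j, a j)) := by
        ring
    _ = x i * ((∑ j, a j) * ∏ k ∈ univ.erase i, x k) := by rw [hs]; ring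
end

section
/- Let p = 2, and let a, b, c be odd positive integers. There exist pairwise distinct x, y, z ∈ (F̄₂)^* with x+y+z = 0 and xy+yz+zx + (a(a-1)/2)x² + (b(b-1)/2)y² + (c(c-1)/2)z² = 0 (computed in F̄₂, the half-integer coefficients being integers) if and only if a ≡ b ≡ c (mod 4). -/
private lemma half_mod_aux (a : ℕ) (ho : Odd a) :
    (a * (a - 1) / 2) % 2 = if a % 4 = 3 then 1 else 0 := by
  have h1 : a % 2 = 1 := Nat.odd_iff.mp ho
  set m := (a - 1) / 2 with hm
  have ham : a = 2 * m + 1 := by omega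
  have hkey : a * (a - 1) = 2 * (a * m) := by
    rw [show a - 1 = 2 * m from by omega]; ring
  have h3 : a * (a - 1) / 2 = a * m := by omega
  have h4 : (a * m) % 2 = m % 2 := by rw [Nat.mul_mod, h1]; omega
  rw [h3, h4]
  split_ifs with h <;> omega

private lemma char2K : (2 : AlgebraicClosure (ZMod 2)) = 0 := by
  have : ((2 : ℕ) : AlgebraicClosure (ZMod 2))
      = algebraMap (ZMod 2) (AlgebraicClosure (ZMod 2)) ((2 : ℕ) : ZMod 2) :=
    (map_natCast _ 2).symm
  have h0 : ((2 : ℕ) : ZMod 2) = 0 := by decide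
  rw [h0, map_zero] at this
  exact_mod_cast this

private lemma castK (n : ℕ) :
    ((n : ℕ) : AlgebraicClosure (ZMod 2)) = if n % 2 = 1 then 1 else 0 := by
  rcases Nat.mod_two_eq_zero_or_one n with h | h
  · rw [if_neg (by omega), show n = 2 * (n / 2) from by omega]
    push_cast
    rw [char2K]; ring
  · rw [if_pos h, show n = 2 * (n / 2) + 1 from by omega]
    push_cast
    rw [char2K]; ring

private lemma coeffK (a : ℕ) (ho : Odd a) :
    ((a * (a - 1) / 2 : ℕ) : AlgebraicClosure (ZMod 2))
      = if a % 4 = 3 then 1 else 0 := by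
  by_cases h : a % 4 = 3 <;> simp [castK, half_mod_aux a ho, h]

/-- Diameter four trees of type `(a,b,c)` in characteristic 2: for odd positive
integers `a, b, c`, there exist pairwise distinct nonzero `x, y, z` in an algebraic
closure of `𝔽₂` with `x + y + z = 0` and
`xy + yz + zx + (a(a-1)/2)x² + (b(b-1)/2)y² + (c(c-1)/2)z² = 0`
if and only if `a ≡ b ≡ c (mod 4)`. -/
theorem stmt7 (a b c : ℕ) (ha : 0 < a) (hb : 0 < b) (hc : 0 < c)
    (hoa : Odd a) (hob : Odd b) (hoc : Odd c) :
    (∃ x y z : AlgebraicClosure (ZMod 2),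
      x ≠ 0 ∧ y ≠ 0 ∧ z ≠ 0 ∧ x ≠ y ∧ y ≠ z ∧ x ≠ z ∧
      x + y + z = 0 ∧
      x * y + y * z + z * x + ((a * (a - 1) / 2 : ℕ) : AlgebraicClosure (ZMod 2)) * x ^ 2
        + ((b * (b - 1) / 2 : ℕ) : AlgebraicClosure (ZMod 2)) * y ^ 2
        + ((c * (c - 1) / 2 : ℕ) : AlgebraicClosure (ZMod 2)) * z ^ 2 = 0) ↔
    (a % 4 = b % 4 ∧ b % 4 = c % 4) := by
  have h2 := char2K
  have ha4 : a % 4 = 1 ∨ a % 4 = 3 := by have := Nat.odd_iff.mp hoa; omega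
  have hb4 : b % 4 = 1 ∨ b % 4 = 3 := by have := Nat.odd_iff.mp hob; omega
  have hc4 : c % 4 = 1 ∨ c % 4 = 3 := by have := Nat.odd_iff.mp hoc; omega
  constructor
  · rintro ⟨x, y, z, hx, hy, hz, hxy, hyz, hxz, hsum, heq⟩
    rw [coeffK a hoa, coeffK b hob, coeffK c hoc] at heq
    have hz2 : z = x + y := by linear_combination hsum - (x + y) * h2
    subst hz2
    rcases ha4 with ha4 | ha4 <;> rcases hb4 with hb4 | hb4 <;>
      rcases hc4 with hc4 | hc4 <;> rw [ha4, hb4, hc4] at heq <;>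
      norm_num at heq <;> try exact ⟨by omega, by omega⟩
    · -- (1,1,3): xy = 0
      have hxy0 : x * y = 0 := by
        linear_combination heq - (2 * x * y + x ^ 2 + y ^ 2) * h2
      rcases mul_eq_zero.mp hxy0 with h | h <;> [exact absurd h hx; exact absurd h hy]
    · -- (1,3,1): x(x+y) = 0
      have h0 : x * (x + y) = 0 := by
        linear_combination heq - (x * y + y ^ 2) * h2
      rcases mul_eq_zero.mp h0 with h | h <;> [exact absurd h hx; exact absurd h hz]
    · -- (1,3,3): y(x+y) = 0
      have h0 : y * (x + y) = 0 := by
        linear_combination heq - (2 * x * y + x ^ 2 + y ^ 2) * h2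
      rcases mul_eq_zero.mp h0 with h | h <;> [exact absurd h hy; exact absurd h hz]
    · -- (3,1,1): y(x+y) = 0
      have h0 : y * (x + y) = 0 := by
        linear_combination heq - (x * y + x ^ 2) * h2
      rcases mul_eq_zero.mp h0 with h | h <;> [exact absurd h hy; exact absurd h hz]
    · -- (3,1,3): x(x+y) = 0
      have h0 : x * (x + y) = 0 := by
        linear_combination heq - (2 * x * y + x ^ 2 + y ^ 2) * h2
      rcases mul_eq_zero.mp h0 with h | h <;> [exact absurd h hx; exact absurd h hz]
    · -- (3,3,1): xy = 0
      have hxy0 : x * y = 0 := by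
        linear_combination heq - (x * y + x ^ 2 + y ^ 2) * h2
      rcases mul_eq_zero.mp hxy0 with h | h <;> [exact absurd h hx; exact absurd h hy]
  · rintro ⟨hab, hbc⟩
    have hdeg : (Polynomial.X ^ 2 + Polynomial.X + 1 :
        Polynomial (AlgebraicClosure (ZMod 2))).degree = 2 := by
      compute_degree!
    obtain ⟨ω, hω⟩ := IsAlgClosed.exists_root
      (Polynomial.X ^ 2 + Polynomial.X + 1 :
        Polynomial (AlgebraicClosure (ZMod 2))) (by rw [hdeg]; norm_num)
    have hω' : ω ^ 2 + ω + 1 = 0 := by simpa [Polynomial.IsRoot] using hω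
    have hω0 : ω ≠ 0 := by
      intro h; rw [h] at hω'; simp at hω'
    have hω1 : ω ≠ 1 := by
      intro h; rw [h] at hω'
      exact one_ne_zero (by linear_combination hω' - h2)
    refine ⟨ω, ω + 1, 1, hω0, ?_, one_ne_zero, ?_, ?_, hω1, ?_, ?_⟩
    · intro h
      exact hω1 (by linear_combination h - h2)
    · intro h
      exact one_ne_zero (α := AlgebraicClosure (ZMod 2)) (by linear_combination -h)
    · intro h
      exact hω0 (by linear_combination h)
    · linear_combination (ω + 1) * h2
    · rw [coeffK a hoa, coeffK b hob, coeffK c hoc]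
      rcases ha4 with ha4 | ha4
      · rw [ha4, show b % 4 = 1 from by omega, show c % 4 = 1 from by omega]
        norm_num
        linear_combination hω' + ω * h2
      · rw [ha4, show b % 4 = 3 from by omega, show c % 4 = 3 from by omega]
        norm_num
        linear_combination 3 * hω' + ω * h2
end

section
/- Let K be an algebraically closed field of characteristic p > 0, and n a positive integer not divisible by p, and suppose a_1,...,a_n are positive integers with a_i ≡ 1 (mod p^h) for all i, where h is the least integer with p^h > n. If β(X) = ∏_{i=1}^n (1 - x_i X)^{a_i} ∈ K[X] (with x_i ∈ K^* pairwise distinct, some x_i = 1) satisfies ν₀(β - 1) = n, then each x_i is an n-th root of unity, i.e. x_i^n = 1. -/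
open Finset Polynomial

lemma dvd_prod_sub_prod' {R : Type*} [CommRing R] {ι : Type*} (s : Finset ι)
    (f g : ι → R) {d : R} (h : ∀ i ∈ s, d ∣ f i - g i) :
    d ∣ (∏ i ∈ s, f i) - ∏ i ∈ s, g i := by
  classical
  induction s using Finset.induction with
  | empty => simp
  | @insert a s hns ih =>
    rw [Finset.prod_insert hns, Finset.prod_insert hns]
    have key : f a * ∏ i ∈ s, f i - g a * ∏ i ∈ s, g i
        = f a * ((∏ i ∈ s, f i) - ∏ i ∈ s, g i) + (f a - g a) * ∏ i ∈ s, g i := by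
      ring
    rw [key]
    exact dvd_add (Dvd.dvd.mul_left (ih fun i hi => h i (Finset.mem_insert_of_mem hi)) _)
      (Dvd.dvd.mul_right (h a (Finset.mem_insert_self a s)) _)

/-- Example 5.4: in characteristic `p ∤ n`, if `aᵢ ≡ 1 (mod p^h)` for all `i`
(where `h` is least with `p^h > n`) and `β(X) = ∏ᵢ (1 - xᵢ X)^{aᵢ}` is a
normalized model (i.e. the order of vanishing of `β - 1` at `0` is `n`, the `xᵢ`
are pairwise distinct, nonzero, and some `xᵢ = 1`), then every `xᵢ` is an
`n`-th root of unity. -/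
theorem stmt9 {K : Type*} [Field K] [IsAlgClosed K] (p : ℕ) (hp : p.Prime) [CharP K p]
    (n : ℕ) (hn : 0 < n) (hpn : ¬ p ∣ n)
    (h : ℕ) (hh : n < p ^ h) (hmin : ∀ h' : ℕ, h' < h → p ^ h' ≤ n)
    (a : Fin n → ℕ) (ha : ∀ i, 0 < a i) (hamod : ∀ i, a i ≡ 1 [MOD p ^ h])
    (x : Fin n → K) (hx : ∀ i, x i ≠ 0) (hx' : Function.Injective x)
    (hx1 : ∃ i, x i = 1)
    (β : K[X]) (hβ : β = ∏ i, (1 - C (x i) * X) ^ a i)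
    (hval : (β - 1).rootMultiplicity 0 = n) :
    ∀ i, x i ^ n = 1 := by
  haveI : Fact p.Prime := ⟨hp⟩
  haveI : CharP K[X] p := Polynomial.instCharP p
  set P : K[X] := ∏ i, (1 - C (x i) * X) with hP
  -- Step 1: X^(n+1) ∣ β - P
  have hdvd1 : (X : K[X]) ^ (n + 1) ∣ β - P := by
    rw [hβ, hP]
    apply dvd_prod_sub_prod'
    intro i _
    -- a i = 1 + p^h * m
    obtain ⟨m, hm⟩ : p ^ h ∣ a i - 1 := (Nat.modEq_iff_dvd' (ha i)).mp (hamod i).symm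
    have h0 := ha i
    have hai : a i = 1 + p ^ h * m := by omega
    have hexpand : (1 - C (x i) * X) ^ a i
        = (1 - C (x i) * X) * ((1 - C (x i) * X) ^ p ^ h) ^ m := by
      rw [hai, pow_add, pow_one, pow_mul]
    rw [hexpand]
    have hfrob : (1 - C (x i) * X) ^ p ^ h = 1 - C (x i ^ p ^ h) * X ^ p ^ h := by
      rw [sub_pow_char_pow, one_pow, mul_pow, ← C_pow]
    have h1 : (X : K[X]) ^ (n + 1) ∣ ((1 - C (x i) * X) ^ p ^ h) ^ m - 1 := by
      have h2 : (X : K[X]) ^ (n + 1) ∣ (1 - C (x i) * X) ^ p ^ h - 1 := by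
        rw [hfrob]
        have : (1 : K[X]) - C (x i ^ p ^ h) * X ^ p ^ h - 1 = -(C (x i ^ p ^ h) * X ^ p ^ h) := by
          ring
        rw [this]
        exact ((pow_dvd_pow (X : K[X]) hh).mul_left _).neg_right
      calc (X : K[X]) ^ (n + 1) ∣ (1 - C (x i) * X) ^ p ^ h - 1 := h2
        _ ∣ ((1 - C (x i) * X) ^ p ^ h) ^ m - 1 ^ m := sub_dvd_pow_sub_pow _ _ m
        _ = ((1 - C (x i) * X) ^ p ^ h) ^ m - 1 := by rw [one_pow]
    have : (1 - C (x i) * X) * ((1 - C (x i) * X) ^ p ^ h) ^ m - (1 - C (x i) * X)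
        = (1 - C (x i) * X) * (((1 - C (x i) * X) ^ p ^ h) ^ m - 1) := by ring
    rw [this]
    exact h1.mul_left _
  -- Step 2: X^n ∣ β - 1
  have hdvd2 : (X : K[X]) ^ n ∣ β - 1 := by
    have := Polynomial.pow_rootMultiplicity_dvd (β - 1) 0
    rwa [hval, C_0, sub_zero] at this
  -- Step 3: X^n ∣ P - 1
  have hdvd3 : (X : K[X]) ^ n ∣ P - 1 := by
    have : P - 1 = -(β - P) + (β - 1) := by ring
    rw [this]
    exact dvd_add ((dvd_trans (pow_dvd_pow _ (Nat.le_succ n)) hdvd1).neg_right) hdvd2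
  obtain ⟨q, hq⟩ := hdvd3
  -- eval P at 1 is 0
  obtain ⟨j, hj⟩ := hx1
  have hevalP1 : P.eval 1 = 0 := by
    rw [hP, eval_prod]
    exact Finset.prod_eq_zero (Finset.mem_univ j) (by simp [hj])
  have hq1 : q.eval 1 = -1 := by
    have h2 := congrArg (eval 1) hq
    simp [hevalP1] at h2
    linear_combination -h2
  have hqne : q ≠ 0 := by
    intro h0; rw [h0] at hq1; simp at hq1
  -- degree bound
  have hfac : ∀ i ∈ (Finset.univ : Finset (Fin n)), (1 - C (x i) * X).natDegree ≤ 1 := by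
    intro i _
    refine le_trans (Polynomial.natDegree_sub_le _ _) ?_
    simp [Polynomial.natDegree_C_mul_X _ (hx i)]
  have hdegP : P.natDegree ≤ n := by
    rw [hP]
    refine le_trans (Polynomial.natDegree_prod_le _ _) ?_
    refine le_trans (Finset.sum_le_card_nsmul _ _ 1 hfac) ?_
    simp
  have hdegq : q.natDegree = 0 := by
    have h1 : (P - 1).natDegree ≤ n := by
      calc (P - 1).natDegree ≤ max P.natDegree (1 : K[X]).natDegree :=
          Polynomial.natDegree_sub_le _ _
        _ ≤ n := by simp [hdegP]
    have h2 : ((X : K[X]) ^ n * q).natDegree = n + q.natDegree := by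
      rw [Polynomial.natDegree_mul (pow_ne_zero _ X_ne_zero) hqne, natDegree_X_pow]
    rw [hq, h2] at h1
    omega
  obtain ⟨c, hc⟩ := Polynomial.natDegree_eq_zero.mp hdegq
  have hcval : c = -1 := by
    have h3 : eval 1 (C c) = -1 := by rw [hc]; exact hq1
    simpa using h3
  -- P = 1 - X^n
  have hPeq : P = 1 - X ^ n := by
    rw [hcval] at hc
    rw [sub_eq_iff_eq_add] at hq
    rw [hq, ← hc]
    simp only [map_neg, map_one]
    ring
  intro i
  have hevalPi : P.eval (x i)⁻¹ = 0 := by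
    rw [hP, eval_prod]
    exact Finset.prod_eq_zero (Finset.mem_univ i) (by simp [mul_inv_cancel₀ (hx i)])
  rw [hPeq] at hevalPi
  simp only [eval_sub, eval_one, eval_pow, eval_X, inv_pow] at hevalPi
  exact inv_eq_one.mp (sub_eq_zero.mp hevalPi).symm
end

section
/- Let (R, 𝔪) be a complete discrete valuation ring with fraction field K of characteristic 0 and residue field k of characteristic p > 0. Let a_1,...,a_n be positive integers with p ∤ a_1···a_{n-1}, and let x̄_1,...,x̄_{n-1} ∈ k^* be pairwise distinct, also distinct from 1, such that ∑_{i=1}^{n-1} a_i x̄_i^m + a_n = 0 in k for m = 1,...,n-1. Assume p ∤ (n-1)!. Then there exist unique x_1,...,x_{n-1} ∈ R lifting the x̄_i and satisfying ∑_{i=1}^{n-1} a_i x_i^m + a_n = 0 in K for m = 1,...,n-1. -/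
/-! The Jacobian of the system `∑ᵢ aᵢ Xᵢ^m + a_N` (`m = 1, …, N`) at a point `x` factors as
`diag(1, …, N) · Vᵀ · diag(a)` with `V` the Vandermonde matrix of `x`, so its determinant
`N! · ∏ᵢ aᵢ · ∏_{i<j} (xⱼ - xᵢ)` is a unit at every lift of the `x̄ᵢ`. The multidimensional Hensel
lemma then applies: Newton's iteration with the Jacobian frozen at a lift `x₀` gains one power of
the maximal ideal per step, hence converges to a root, and two roots lifting the same point agree
modulo every power of the maximal ideal, because `J(x₀)(z - y) ≡ f(z) - f(y) = 0` improves any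
congruence `z ≡ y` by one power. -/

open Finset IsLocalRing

theorem IsHausdorff.eq_zero_of_forall_mem_pow {R : Type*} [CommRing R] {I : Ideal R}
    [IsHausdorff I R] {x : R} (hx : ∀ k, x ∈ I ^ k) : x = 0 :=
  IsHausdorff.haus ‹_› x fun k => by simpa [SModEq.sub_mem] using hx k

theorem IsPrecomplete.exists_forall_sub_mem_pow {R : Type*} [CommRing R] {I : Ideal R}
    [IsPrecomplete I R] {f : ℕ → R} (hf : ∀ k, f (k + 1) - f k ∈ I ^ k) :
    ∃ L, ∀ k, L - f k ∈ I ^ k := by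
  have hcauchy : ∀ m n, m ≤ n → f n - f m ∈ I ^ m := by
    intro m n hmn
    induction n, hmn using Nat.le_induction with
    | base => simp
    | succ n hmn ih =>
      rw [← sub_add_sub_cancel]
      exact add_mem (Ideal.pow_le_pow_right hmn (hf n)) ih
  obtain ⟨L, hL⟩ := IsPrecomplete.prec ‹_› (f := f) fun {m n} hmn => by
    rw [SModEq.sub_mem, smul_eq_mul, Ideal.mul_top, ← neg_sub]
    exact neg_mem (hcauchy m n hmn)
  refine ⟨L, fun k => ?_⟩
  have hk := hL k
  rw [SModEq.sub_mem, smul_eq_mul, Ideal.mul_top, ← neg_sub] at hk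
  exact neg_mem_iff.mp hk

namespace Matrix
variable {R m n : Type*} [CommRing R] [Fintype n]

theorem mulVec_apply_mem_mul {I J : Ideal R} {M : Matrix m n R} {v : n → R}
    (hM : ∀ r i, M r i ∈ I) (hv : ∀ i, v i ∈ J) (r : m) : (M *ᵥ v) r ∈ I * J :=
  Ideal.sum_mem _ fun i _ => Ideal.mul_mem_mul (hM r i) (hv i)

theorem mulVec_apply_mem {I : Ideal R} (M : Matrix m n R) {v : n → R}
    (hv : ∀ i, v i ∈ I) (r : m) : (M *ᵥ v) r ∈ I :=
  Ideal.sum_mem _ fun i _ => I.mul_mem_left _ (hv i)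

theorem mem_of_mulVec_apply_mem [DecidableEq n] {I : Ideal R} {M : Matrix n n R}
    (hM : IsUnit M.det) {v : n → R} (hv : ∀ r, (M *ᵥ v) r ∈ I) (i : n) : v i ∈ I := by
  simpa [mulVec_mulVec, nonsing_inv_mul _ hM] using mulVec_apply_mem M⁻¹ hv i

end Matrix

namespace MvPolynomial
open scoped Matrix
variable {R σ ι : Type*} [CommRing R] [Fintype σ] {I : Ideal R}

theorem eval_add_sub_eval_sub_sum_mem_sq (f : MvPolynomial σ R) (x : σ → R) {h : σ → R}
    (hh : ∀ i, h i ∈ I) :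
    eval (x + h) f - eval x f - ∑ i, eval x (pderiv i f) * h i ∈ I ^ 2 := by
  classical
  induction f using MvPolynomial.induction_on with
  | C a => simp
  | add p q hp hq =>
    convert add_mem hp hq using 1
    simp only [map_add, add_mul, sum_add_distrib]
    ring
  | mul_X p j hp =>
    set D := ∑ i, eval x (pderiv i p) * h i
    have hD : D ∈ I := Ideal.sum_mem _ fun i _ => I.mul_mem_left _ (hh i)
    have hderiv : ∑ i, eval x (pderiv i (p * X j)) * h i = D * x j + eval x p * h j := by
      simp only [pderiv_mul, pderiv_X, map_add, map_mul, eval_X, Pi.single_apply, add_mul,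
        sum_add_distrib, D, sum_mul]
      simp [mul_right_comm]
    have hDh : D * h j ∈ I ^ 2 := by
      rw [sq]
      exact Ideal.mul_mem_mul hD (hh j)
    rw [hderiv]
    convert add_mem (Ideal.mul_mem_right (x j + h j) _ hp) hDh using 1
    simp only [map_mul, eval_X, Pi.add_apply]
    ring

theorem eval_sub_eval_mem (f : MvPolynomial σ R) {x y : σ → R} (hxy : ∀ i, x i - y i ∈ I) :
    eval x f - eval y f ∈ I := by
  have htaylor := eval_add_sub_eval_sub_sum_mem_sq f y (h := x - y) hxy
  rw [add_sub_cancel] at htaylor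
  rw [← sub_add_cancel (eval x f - eval y f) (∑ i, eval y (pderiv i f) * (x i - y i))]
  exact add_mem (Ideal.pow_le_self two_ne_zero htaylor)
    (Ideal.sum_mem _ fun i _ => I.mul_mem_left _ (hxy i))

noncomputable def jacobianAt (f : ι → MvPolynomial σ R) (x : σ → R) : Matrix ι σ R :=
  Matrix.of fun r i => eval x (pderiv i (f r))

theorem jacobianAt_sub_mem (f : ι → MvPolynomial σ R) {x y : σ → R} (hxy : ∀ i, x i - y i ∈ I)
    (r : ι) (i : σ) : (jacobianAt f x - jacobianAt f y) r i ∈ I :=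
  eval_sub_eval_mem _ hxy

theorem eval_add_sub_eval_sub_jacobianAt_mulVec_mem_pow (f : ι → MvPolynomial σ R)
    {x₀ x h : σ → R} {k : ℕ} (hx : ∀ i, x i - x₀ i ∈ I) (hh : ∀ i, h i ∈ I ^ (k + 1)) (r : ι) :
    eval (x + h) (f r) - eval x (f r) - (jacobianAt f x₀ *ᵥ h) r ∈ I ^ (k + 2) := by
  have htaylor : eval (x + h) (f r) - eval x (f r) - (jacobianAt f x *ᵥ h) r ∈ I ^ (k + 2) :=
    Ideal.pow_le_pow_right (show k + 2 ≤ (k + 1) * 2 by omega) (by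
      rw [pow_mul]
      exact eval_add_sub_eval_sub_sum_mem_sq (f r) x hh)
  have hdiff : ((jacobianAt f x - jacobianAt f x₀) *ᵥ h) r ∈ I ^ (k + 2) := by
    rw [pow_succ' I (k + 1)]
    exact Matrix.mulVec_apply_mem_mul (jacobianAt_sub_mem f hx) hh r
  convert add_mem htaylor hdiff using 1
  rw [Matrix.sub_mulVec, Pi.sub_apply]
  ring

section Hensel
variable [DecidableEq σ] (f : σ → MvPolynomial σ R) {x₀ : σ → R}

noncomputable def newtonStep (x₀ x : σ → R) : σ → R :=
  x - (jacobianAt f x₀)⁻¹ *ᵥ fun r => eval x (f r)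

theorem newtonStep_sub_mem {J : Ideal R} {x : σ → R} (hx : ∀ r, eval x (f r) ∈ J) (i : σ) :
    newtonStep f x₀ x i - x i ∈ J := by
  simpa [newtonStep] using Matrix.mulVec_apply_mem _ hx i

theorem eval_newtonStep_mem (hJ : IsUnit (jacobianAt f x₀).det) {x : σ → R} {k : ℕ}
    (hx : ∀ i, x i - x₀ i ∈ I) (hfx : ∀ r, eval x (f r) ∈ I ^ (k + 1)) (r : σ) :
    eval (newtonStep f x₀ x) (f r) ∈ I ^ (k + 2) := by
  set h := newtonStep f x₀ x - x
  have hJh : jacobianAt f x₀ *ᵥ h = -fun r => eval x (f r) := by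
    simp only [h, newtonStep, sub_sub_cancel_left, Matrix.mulVec_neg, Matrix.mulVec_mulVec,
      Matrix.mul_nonsing_inv _ hJ, Matrix.one_mulVec]
  have key := eval_add_sub_eval_sub_jacobianAt_mulVec_mem_pow f (h := h) hx
    (fun i => newtonStep_sub_mem f hfx i) r
  rwa [add_sub_cancel, hJh, Pi.neg_apply, sub_neg_eq_add, sub_add_cancel] at key

theorem iterate_newtonStep_mem (hJ : IsUnit (jacobianAt f x₀).det)
    (hf : ∀ r, eval x₀ (f r) ∈ I) (k : ℕ) :
    (∀ i, (newtonStep f x₀)^[k] x₀ i - x₀ i ∈ I) ∧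
      ∀ r, eval ((newtonStep f x₀)^[k] x₀) (f r) ∈ I ^ (k + 1) := by
  induction k with
  | zero => simpa using hf
  | succ k ih =>
    rw [Function.iterate_succ_apply']
    refine ⟨fun i => ?_, eval_newtonStep_mem f hJ ih.1 ih.2⟩
    rw [← sub_add_sub_cancel]
    exact add_mem (Ideal.pow_le_self k.succ_ne_zero (newtonStep_sub_mem f ih.2 i)) (ih.1 i)

theorem exists_eval_eq_zero_of_isUnit_det_jacobianAt [IsAdicComplete I R]
    (hJ : IsUnit (jacobianAt f x₀).det) (hf : ∀ r, eval x₀ (f r) ∈ I) :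
    ∃ x, (∀ i, x i - x₀ i ∈ I) ∧ ∀ r, eval x (f r) = 0 := by
  set s := fun k => (newtonStep f x₀)^[k] x₀
  have hstep : ∀ k i, s (k + 1) i - s k i ∈ I ^ (k + 1) := fun k i => by
    simpa only [s, Function.iterate_succ_apply'] using
      newtonStep_sub_mem f (iterate_newtonStep_mem f hJ hf k).2 i
  choose L hL using fun i => IsPrecomplete.exists_forall_sub_mem_pow (I := I) (f := (s · i))
    fun k => Ideal.pow_le_pow_right k.le_succ (hstep k i)
  refine ⟨L, fun i => ?_, fun r => IsHausdorff.eq_zero_of_forall_mem_pow (I := I) fun k => ?_⟩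
  · rw [← sub_add_sub_cancel _ (s 1 i)]
    simpa [s] using add_mem (hL i 1) (hstep 0 i)
  · rw [← sub_add_cancel (eval L (f r)) (eval (s k) (f r))]
    exact add_mem (eval_sub_eval_mem _ fun i => hL i k)
      (Ideal.pow_le_pow_right k.le_succ ((iterate_newtonStep_mem f hJ hf k).2 r))

theorem eq_of_eval_eq_zero_of_isUnit_det_jacobianAt [IsHausdorff I R]
    (hJ : IsUnit (jacobianAt f x₀).det) {y z : σ → R}
    (hy : ∀ i, y i - x₀ i ∈ I) (hz : ∀ i, z i - x₀ i ∈ I)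
    (hfy : ∀ r, eval y (f r) = 0) (hfz : ∀ r, eval z (f r) = 0) : y = z := by
  have hclose : ∀ k i, z i - y i ∈ I ^ (k + 1) := by
    intro k
    induction k with
    | zero => exact fun i => by simpa using sub_mem (hz i) (hy i)
    | succ k ih =>
      refine Matrix.mem_of_mulVec_apply_mem hJ fun r => ?_
      have key := eval_add_sub_eval_sub_jacobianAt_mulVec_mem_pow f (h := z - y) hy ih r
      rwa [add_sub_cancel, hfz, hfy, sub_self, zero_sub, neg_mem_iff] at key
  funext i
  exact (sub_eq_zero.mp (IsHausdorff.eq_zero_of_forall_mem_pow (I := I)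
    fun k => Ideal.pow_le_pow_right k.le_succ (hclose k i))).symm

theorem existsUnique_eval_eq_zero_of_isUnit_det_jacobianAt [IsAdicComplete I R]
    (hJ : IsUnit (jacobianAt f x₀).det) (hf : ∀ r, eval x₀ (f r) ∈ I) :
    ∃! x, (∀ i, x i - x₀ i ∈ I) ∧ ∀ r, eval x (f r) = 0 := by
  obtain ⟨x, hx, hfx⟩ := exists_eval_eq_zero_of_isUnit_det_jacobianAt f hJ hf
  exact ⟨x, ⟨hx, hfx⟩, fun y ⟨hy, hfy⟩ =>
    eq_of_eval_eq_zero_of_isUnit_det_jacobianAt f hJ hy hx hfy hfx⟩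

end Hensel

section WeightedPowerSums
variable {N : ℕ}

noncomputable def weightedPowerSums (a : Fin N → ℕ) (aN : ℕ) (r : Fin N) :
    MvPolynomial (Fin N) R :=
  ∑ i, (a i : MvPolynomial (Fin N) R) * X i ^ ((r : ℕ) + 1) + aN

@[simp]
theorem eval_weightedPowerSums (a : Fin N → ℕ) (aN : ℕ) (x : Fin N → R) (r : Fin N) :
    eval x (weightedPowerSums a aN r) = ∑ i, (a i : R) * x i ^ ((r : ℕ) + 1) + aN := by
  simp [weightedPowerSums]

theorem jacobianAt_weightedPowerSums (a : Fin N → ℕ) (aN : ℕ) (x : Fin N → R) :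
    jacobianAt (weightedPowerSums a aN) x =
      Matrix.diagonal (fun r : Fin N => (((r : ℕ) + 1 : ℕ) : R)) * (Matrix.vandermonde x)ᵀ *
        Matrix.diagonal (fun i => (a i : R)) := by
  ext r i
  simp [jacobianAt, weightedPowerSums, Pi.single_apply]
  ring

theorem det_jacobianAt_weightedPowerSums (a : Fin N → ℕ) (aN : ℕ) (x : Fin N → R) :
    (jacobianAt (weightedPowerSums a aN) x).det =
      N.factorial * (∏ i, ∏ j ∈ Ioi i, (x j - x i)) * ((∏ i, a i : ℕ) : R) := by
  rw [jacobianAt_weightedPowerSums, Matrix.det_mul, Matrix.det_mul, Matrix.det_diagonal,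
    Matrix.det_diagonal, Matrix.det_transpose, Matrix.det_vandermonde, Nat.cast_prod,
    ← Nat.cast_prod, Fin.prod_univ_eq_prod_range (fun r => r + 1),
    Finset.prod_range_add_one_eq_factorial]

theorem isUnit_det_jacobianAt_weightedPowerSums [IsLocalRing R] (a : Fin N → ℕ) (aN : ℕ)
    {x : Fin N → R} (hx : Function.Injective (residue R ∘ x))
    (hfac : (N.factorial : ResidueField R) ≠ 0) (ha : ((∏ i, a i : ℕ) : ResidueField R) ≠ 0) :
    IsUnit (jacobianAt (weightedPowerSums a aN) x).det := by
  rw [← residue_ne_zero_iff_isUnit, det_jacobianAt_weightedPowerSums]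
  simp only [map_mul, map_natCast, map_prod, map_sub]
  refine mul_ne_zero (mul_ne_zero hfac ?_) ha
  exact prod_ne_zero_iff.mpr fun i _ => prod_ne_zero_iff.mpr fun j hj =>
    sub_ne_zero.mpr fun h => (mem_Ioi.mp hj).ne' (hx h)

end WeightedPowerSums

end MvPolynomial

theorem Finset.forall_mem_Icc_one_iff {N : ℕ} {P : ℕ → Prop} :
    (∀ m ∈ Icc 1 N, P m) ↔ ∀ r : Fin N, P (r + 1) := by
  refine ⟨fun h r => h _ (mem_Icc.mpr ⟨by omega, r.isLt⟩), fun h m hm => ?_⟩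
  obtain ⟨hm1, hmN⟩ := mem_Icc.mp hm
  simpa [Nat.sub_add_cancel hm1] using h ⟨m - 1, by omega⟩

theorem stmt11_general {R : Type*} [CommRing R] [IsDomain R] [IsDiscreteValuationRing R]
    [IsAdicComplete (maximalIdeal R) R]
    (p : ℕ) [CharP (ResidueField R) p]
    (n : ℕ)
    (a : Fin (n - 1) → ℕ) (aN : ℕ)
    (hpa : ¬ p ∣ ∏ i, a i) (hpfac : ¬ p ∣ (n - 1).factorial)
    (xb : Fin (n - 1) → ResidueField R)
    (hxb : Function.Injective xb)
    (heq : ∀ m ∈ Finset.Icc 1 (n - 1), ∑ i, (a i : ResidueField R) * xb i ^ m + aN = 0) :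
    ∃! x : Fin (n - 1) → R,
      (∀ i, residue R (x i) = xb i) ∧
      ∀ m ∈ Finset.Icc 1 (n - 1), ∑ i, (a i : R) * x i ^ m + aN = 0 := by
  choose x₀ hx₀ using fun i => residue_surjective (xb i)
  set f := MvPolynomial.weightedPowerSums (R := R) a aN
  choose x₀ hx₀ using fun i => residue_surjective (xb i)
  have natCast_ne_zero {m : ℕ} (hm : ¬ p ∣ m) : (m : ResidueField R) ≠ 0 :=
    mt (CharP.cast_eq_zero_iff _ p m).mp hm
  have hJ : IsUnit (MvPolynomial.jacobianAt f x₀).det :=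
    MvPolynomial.isUnit_det_jacobianAt_weightedPowerSums a aN
      (by simpa [Function.comp_def, hx₀] using hxb) (natCast_ne_zero hpfac) (natCast_ne_zero hpa)
  have hf (r : Fin (n - 1)) : MvPolynomial.eval x₀ (f r) ∈ maximalIdeal R := by
    rw [← residue_eq_zero_iff]
    simpa [f, hx₀] using forall_mem_Icc_one_iff.mp heq r
  refine (existsUnique_congr fun y => ?_).mp
    (MvPolynomial.existsUnique_eval_eq_zero_of_isUnit_det_jacobianAt f hJ hf)
  simp only [f, forall_mem_Icc_one_iff, MvPolynomial.eval_weightedPowerSums, ← hx₀,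
    ← Ideal.Quotient.eq]
  exact Iff.rfl

/-- Proposition 6.1 (lifting normalized models): let `R` be a complete discrete
valuation ring whose fraction field has characteristic `0` and whose residue
field has characteristic `p > 0`. Given positive integers `a₁, …, aₙ` with
`p ∤ a₁⋯a_{n-1}` and `p ∤ (n-1)!`, and pairwise distinct elements
`x̄₁, …, x̄_{n-1}` of the residue field, nonzero and distinct from `1`, satisfying
`∑_{i<n} aᵢ x̄ᵢ^m + aₙ = 0` for `m = 1, …, n-1`, there exist unique lifts
`x₁, …, x_{n-1} ∈ R` satisfying the same equations. -/
theorem stmt11 {R : Type*} [CommRing R] [IsDomain R] [IsDiscreteValuationRing R]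
    [IsAdicComplete (maximalIdeal R) R]
    [CharZero (FractionRing R)]
    (p : ℕ) (hp : p.Prime) [CharP (ResidueField R) p]
    (n : ℕ) (hn : 2 ≤ n)
    (a : Fin (n - 1) → ℕ) (ha : ∀ i, 0 < a i) (aN : ℕ) (haN : 0 < aN)
    (hpa : ¬ p ∣ ∏ i, a i) (hpfac : ¬ p ∣ (n - 1).factorial)
    (xb : Fin (n - 1) → ResidueField R)
    (hxb0 : ∀ i, xb i ≠ 0) (hxb1 : ∀ i, xb i ≠ 1) (hxb : Function.Injective xb)
    (heq : ∀ m ∈ Finset.Icc 1 (n - 1), ∑ i, (a i : ResidueField R) * xb i ^ m + aN = 0) :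
    ∃! x : Fin (n - 1) → R,
      (∀ i, residue R (x i) = xb i) ∧
      ∀ m ∈ Finset.Icc 1 (n - 1), ∑ i, (a i : R) * x i ^ m + aN = 0 :=
  stmt11_general p n a aN hpa hpfac xb hxb heq
end

section
/- Let R be a discrete valuation ring with fraction field K, residue field k of characteristic p, and valuation ν. Let a_1,...,a_n be positive integers such that p does not divide any sum ∑_{j∈S} a_j over nonempty subsets S ⊆ {1,...,n-1} (i.e. p does not divide d_n = ∏_{∅≠S⊆{1,...,n-1}} ∑_{j∈S} a_j), and p divides a_n but not a_1+...+a_n. Suppose x_1,...,x_n ∈ R are pairwise distinct with x_n = 1 and max norm: ν(x_i) ≥ 0 for all i, some x_i a unit, and ∑_{i=1}^n a_i x_i^m = 0 in K for m = 1,...,n-1. Then ν(x_j) > 0 for all j < n, i.e. x̄_j = 0 in k for all j ≠ n. -/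
open Finset IsLocalRing

/-!
Reduce the power-sum relations to the residue field, where the term of `xₙ` drops out
because `p ∣ aₙ`. Grouping the other indices by the value `y` of `x̄ᵢ` gives relations
`∑_y b_y y^m = 0` for at least as many consecutive exponents `m ≥ 1` as there are values `y`,
and each `b_y` is the image of a nonempty subset sum of `a₁, …, aₙ₋₁`, hence nonzero.
Vandermonde nondegeneracy forces `b_y y = 0`, so the only value taken is `y = 0`.
-/

namespace Finset

variable {R : Type*} [CommRing R] [IsDomain R]

theorem eq_zero_of_forall_sum_mul_pow_eq_zero (T : Finset R) (b : R → R)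
    (h : ∀ m < #T, ∑ y ∈ T, b y * y ^ m = 0) : ∀ y ∈ T, b y = 0 := by
  let e := T.equivFin.symm
  have hv : (fun t => b (e t)) = 0 :=
    Matrix.eq_zero_of_forall_pow_sum_mul_pow_eq_zero (f := fun t => (e t : R))
      (Subtype.val_injective.comp e.injective) fun i => by
        rw [← h i i.2, ← T.sum_coe_sort]
        exact e.sum_comp fun y => b y * (y : R) ^ (i : ℕ)
  intro y hy
  simpa [e] using congrFun hv (T.equivFin ⟨y, hy⟩)

theorem sum_fiber_eq_zero_of_forall_sum_mul_pow_eq_zero [DecidableEq R] {ι : Type*}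
    {S : Finset ι} {N : ℕ} (hS : #S ≤ N) (c w : ι → R)
    (h : ∀ m ∈ Icc 1 N, ∑ i ∈ S, w i * c i ^ m = 0) {y : R} (hy : y ≠ 0) :
    ∑ i ∈ S with c i = y, w i = 0 := by
  have hmaps : ∀ i ∈ S, c i ∈ S.image c := fun i hi => mem_image_of_mem c hi
  have hfibers : ∀ m < #(S.image c),
      ∑ z ∈ S.image c, ((∑ i ∈ S with c i = z, w i) * z) * z ^ m = 0 := by
    intro m hm
    have hmN : m + 1 ≤ N := hm.trans_le (card_image_le.trans hS)
    rw [← h (m + 1) (mem_Icc.mpr ⟨le_add_self, hmN⟩), ← sum_fiberwise_of_maps_to hmaps]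
    refine sum_congr rfl fun z _ => ?_
    rw [mul_assoc, ← pow_succ', sum_mul]
    exact sum_congr rfl fun i hi => by rw [(mem_filter.mp hi).2]
  by_cases hyT : y ∈ S.image c
  · have := eq_zero_of_forall_sum_mul_pow_eq_zero _ _ hfibers y hyT
    exact (mul_eq_zero.mp this).resolve_right hy
  · refine sum_eq_zero fun i hi => absurd ?_ hyT
    rw [← (mem_filter.mp hi).2]
    exact hmaps i (mem_filter.mp hi).1

end Finset

theorem stmt14_general {R : Type*} [CommRing R] [IsDomain R] [IsDiscreteValuationRing R]
    (p : ℕ) [CharP (ResidueField R) p]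
    (n : ℕ)
    (a : Fin (n + 1) → ℕ)
    (hreg : ∀ S : Finset (Fin (n + 1)), S.Nonempty → Fin.last n ∉ S →
      ¬ p ∣ ∑ j ∈ S, a j)
    (hpan : p ∣ a (Fin.last n))
    (x : Fin (n + 1) → R)
    (heq : ∀ m ∈ Finset.Icc 1 n, ∑ i, (a i : R) * x i ^ m = 0) :
    ∀ j, j ≠ Fin.last n → residue R (x j) = 0 := by
  classical
  intro j hj
  let c i := residue R (x i)
  have hres : ∀ m ∈ Icc 1 n,
      ∑ i ∈ univ.erase (Fin.last n), (a i : ResidueField R) * c i ^ m = 0 := by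
    intro m hm
    have hlast : (a (Fin.last n) : ResidueField R) = 0 := (CharP.cast_eq_zero_iff _ p _).mpr hpan
    have := congrArg (residue R) (heq m hm)
    rw [← add_sum_erase _ _ (mem_univ (Fin.last n))] at this
    simpa [c, hlast] using this
  by_contra hcj
  have hfiber := sum_fiber_eq_zero_of_forall_sum_mul_pow_eq_zero (by simp) c
    (fun i => (a i : ResidueField R)) hres hcj
  rw [← Nat.cast_sum, CharP.cast_eq_zero_iff _ p] at hfiber
  exact hreg _ ⟨j, by simp [hj, c]⟩ (by simp) hfiber

/-- Lemma 8.1 (reduction of normalized models at `aₙ`-regular primes): let `R` be a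
discrete valuation ring with residue characteristic `p`. Suppose `p` divides no
subset sum `∑_{j ∈ S} aⱼ` for nonempty `S ⊆ {1, …, n-1}`, `p ∣ aₙ` and
`p ∤ a₁+⋯+aₙ`. If `x₁, …, xₙ ∈ R` are pairwise distinct, `xₙ = 1`, some `xᵢ` is a
unit, and `∑ᵢ aᵢ xᵢ^m = 0` for `m = 1, …, n-1`, then `x̄ⱼ = 0` in the residue
field for all `j ≠ n`. -/
theorem stmt14 {R : Type*} [CommRing R] [IsDomain R] [IsDiscreteValuationRing R]
    (p : ℕ) (hp : p.Prime) [CharP (ResidueField R) p]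
    (n : ℕ) (hn : 0 < n)
    (a : Fin (n + 1) → ℕ) (ha : ∀ i, 0 < a i)
    (hreg : ∀ S : Finset (Fin (n + 1)), S.Nonempty → Fin.last n ∉ S →
      ¬ p ∣ ∑ j ∈ S, a j)
    (hpan : p ∣ a (Fin.last n)) (hpsum : ¬ p ∣ ∑ i, a i)
    (x : Fin (n + 1) → R) (hx : Function.Injective x) (hxn : x (Fin.last n) = 1)
    (hxu : ∃ i, IsUnit (x i))
    (heq : ∀ m ∈ Finset.Icc 1 n, ∑ i, (a i : R) * x i ^ m = 0) :
    ∀ j, j ≠ Fin.last n → residue R (x j) = 0 :=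
  stmt14_general p n a hreg hpan x heq
end

section
/- Let R be a discrete valuation ring with valuation ν: K^* → ℤ, residue characteristic p, and let a_1,...,a_n be positive integers such that p ∤ a_j for j < n, p ∤ (a_1+...+a_n), and p does not divide ∑_{j∈S} a_j for any nonempty S ⊆ {1,...,n-1}. Suppose x_1,...,x_n ∈ R satisfy x_n = 1, ν(x_j) > 0 for j < n, the x_j pairwise distinct, and for each i, a_i ∏_{j≠i}(x_j - x_i) = (a_1+...+a_n)∏_{j≠i} x_j in K. Then (n-1)·ν(x_j) = ν(a_n) for all j < n, and ν(x_j - x_k) = ν(x_j) for all distinct j, k < n. -/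
/-!
Let `π` be an `x_j` (`j < n`) of minimal valuation and write `x_j = π w_j`; the claims say that the
residues `ω_j` of the `w_j` are nonzero and pairwise distinct, and that `ν(a_n) = ∑_{j<n} ν(x_j)`
(the relation for `i = n`, in which `∏ (x_j - 1)` and `∑ a` are units).

The relations say that `∑_i a_i x_i ∏_{j≠i} (x_j - X)`, of degree `< n`, takes the value
`(∑ a) ∏ x_j` at all `n` nodes, so it is that constant. Substituting `X ↦ πX`, dividing by
`π^(n-1)` and reducing modulo the maximal ideal turns this into
`(a_n + ∑_{i<n} a_i ω_i / (ω_i - X)) ∏_{j<n} (ω_j - X) = (∑ a) ∏_{j<n} ω_j`.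
If some `ω_j` vanished, the right side would be `0`, so the simple fraction at `c = ω_{i₀} = 1`
would have to cancel, i.e. `c ∑_{ω_i = c} a_i = 0`, against the subset-sum hypothesis. If `ω_i = ω_j`
with `i ≠ j`, the left side vanishes at `X = ω_i`, so again `∏ ω_j = 0`.
-/

open Finset IsLocalRing

section Interpolation

open Polynomial

variable {R ι : Type*} [CommRing R]

lemma natDegree_prod_C_sub_X_le (s : Finset ι) (v : ι → R) :
    (∏ j ∈ s, (C (v j) - X)).natDegree ≤ #s := by
  have h1 (j : ι) : (C (v j) - X).natDegree ≤ 1 :=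
    (natDegree_sub_le _ _).trans (max_le ((natDegree_C _).trans_le zero_le_one) natDegree_X_le)
  exact (natDegree_prod_le _ _).trans ((sum_le_sum fun j _ => h1 j).trans (by simp))

variable [IsDomain R] [Fintype ι] [DecidableEq ι]

theorem sum_C_mul_prod_C_sub_X_eq_C [Nonempty ι] {x : ι → R} (hx : Function.Injective x)
    {b : ι → R} {s : R}
    (h : ∀ t, b t * ∏ j ∈ univ.erase t, (x j - x t) = s * ∏ j ∈ univ.erase t, x j) :
    ∑ i, C (b i * x i) * ∏ j ∈ univ.erase i, (C (x j) - X) = C (s * ∏ j, x j) := by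
  have hcard : 0 < Fintype.card ι := Fintype.card_pos
  have hdeg : (∑ i, C (b i * x i) * ∏ j ∈ univ.erase i, (C (x j) - X)).natDegree
      ≤ Fintype.card ι - 1 := by
    refine natDegree_sum_le_of_forall_le _ _ fun i _ => (natDegree_C_mul_le _ _).trans ?_
    simpa [card_erase_of_mem] using natDegree_prod_C_sub_X_le (univ.erase i) x
  refine eq_of_degrees_lt_of_eval_index_eq univ hx.injOn ?_ ?_ fun t _ => ?_
  · refine (degree_le_natDegree).trans_lt ?_
    rw [card_univ, Nat.cast_lt]
    omega
  · exact (degree_C_le).trans_lt (by rw [card_univ]; exact_mod_cast hcard)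
  · rw [eval_finsetSum, sum_eq_single t, eval_mul, eval_C, eval_prod, eval_C]
    · simp only [eval_sub, eval_C, eval_X]
      rw [mul_right_comm, h, mul_assoc, prod_erase_mul _ _ (mem_univ t)]
    · intro i _ hit
      rw [eval_mul, eval_prod, prod_eq_zero (mem_erase.2 ⟨Ne.symm hit, mem_univ t⟩) (by simp),
        mul_zero]
    · exact fun ht => (ht (mem_univ t)).elim

end Interpolation

section PartialFractions

open Polynomial

variable {R ι : Type*} [CommRing R] [DecidableEq ι]

/-- `∏_{j ∈ I} (ω j - X)` times `bL + ∑_{i ∈ I} b i * ω i / (ω i - X)`. -/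
noncomputable def partialFractionNumerator (I : Finset ι) (ω b : ι → R) (bL : R) : R[X] :=
  C bL * ∏ j ∈ I, (C (ω j) - X) + ∑ i ∈ I, C (b i * ω i) * ∏ j ∈ I.erase i, (C (ω j) - X)

variable {I : Finset ι} {ω b : ι → R} {bL : R}

theorem eval_partialFractionNumerator_eq_zero_of_eq {i j : ι} (hi : i ∈ I) (hj : j ∈ I)
    (hij : i ≠ j) (hω : ω i = ω j) : (partialFractionNumerator I ω b bL).eval (ω i) = 0 := by
  have hvanish (l : ι) (hl : l ∈ I) : ∏ m ∈ I.erase l, (ω m - ω i) = 0 := by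
    by_cases hli : l = i
    · subst hli
      exact prod_eq_zero (mem_erase.2 ⟨hij.symm, hj⟩) (by rw [hω, sub_self])
    · exact prod_eq_zero (mem_erase.2 ⟨Ne.symm hli, hi⟩) (sub_self _)
  simp only [partialFractionNumerator, eval_add, eval_mul, eval_C, eval_finsetSum, eval_prod,
    eval_sub, eval_X]
  rw [prod_eq_zero hi (sub_self _), mul_zero, zero_add]
  exact sum_eq_zero fun l hl => by rw [hvanish l hl, mul_zero]

variable [IsDomain R]

theorem mul_sum_fiber_eq_zero_of_partialFractionNumerator_eq_zero [DecidableEq R]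
    (hE : partialFractionNumerator I ω b bL = 0) (c : R) :
    c * ∑ i ∈ I with ω i = c, b i = 0 := by
  set T := I.filter (ω · = c)
  set U := I.filter (¬ ω · = c)
  set Q : R[X] := C c - X
  set D : R[X] := ∏ j ∈ I, (C (ω j) - X)
  set r : R[X] := ∏ j ∈ U, (C (ω j) - X)
  set term : ι → R[X] := fun i => C (b i * ω i) * ∏ j ∈ I.erase i, (C (ω j) - X)
  have hQT : ∏ j ∈ T, (C (ω j) - X) = Q ^ #T := by
    rw [← prod_const]
    exact prod_congr rfl fun j hj => by rw [(mem_filter.1 hj).2]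
  have hD : D = Q ^ #T * r := by rw [← hQT, prod_filter_mul_prod_filter_not]
  have hdvd_U (i : ι) (hi : i ∈ U) : Q ^ #T ∣ term i := by
    refine dvd_mul_of_dvd_right ?_ _
    rw [← hQT]
    refine prod_dvd_prod_of_subset _ _ _ fun j hj => ?_
    obtain ⟨hjI, hjc⟩ := mem_filter.1 hj
    exact mem_erase.2 ⟨fun hji => (mem_filter.1 hi).2 (hji ▸ hjc), hjI⟩
  have hfiber : Q * ∑ i ∈ T, term i = C (c * ∑ i ∈ T, b i) * D := by
    rw [mul_sum, mul_comm c, sum_mul, map_sum, sum_mul]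
    refine sum_congr rfl fun i hi => ?_
    obtain ⟨hiI, hic⟩ := mem_filter.1 hi
    simp only [term, D]
    rw [← mul_prod_erase I _ hiI, hic]
    ring
  have hT : ∑ i ∈ T, term i = -(C bL * D + ∑ i ∈ U, term i) := by
    rw [partialFractionNumerator, ← sum_filter_add_sum_filter_not I (ω · = c)] at hE
    linear_combination hE
  have hdvd_T : Q ^ #T ∣ ∑ i ∈ T, term i := by
    rw [hT]
    exact (dvd_add (dvd_mul_of_dvd_right (hD ▸ dvd_mul_right _ _) _) (dvd_sum hdvd_U)).neg_right
  have hdvd : Q ^ #T * Q ∣ Q ^ #T * (C (c * ∑ i ∈ T, b i) * r) := by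
    have h : Q ^ #T * Q ∣ (∑ i ∈ T, term i) * Q := mul_dvd_mul_right hdvd_T Q
    rwa [mul_comm (∑ i ∈ T, term i), hfiber, hD, mul_left_comm] at h
  have hQ : Q ≠ 0 := fun h => X_sub_C_ne_zero c (by rw [← neg_sub]; exact neg_eq_zero.2 h)
  have hroot := eval_eq_zero_of_dvd_of_eval_eq_zero (x := c)
    ((mul_dvd_mul_iff_left (pow_ne_zero _ hQ)).1 hdvd) (by simp [Q])
  have hr : r.eval c ≠ 0 := by
    simp only [r, eval_prod, eval_sub, eval_C, eval_X]
    exact prod_ne_zero_iff.2 fun j hj => sub_ne_zero.2 (mem_filter.1 hj).2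
  simpa [hr, eval_finsetSum] using hroot

theorem ne_zero_and_injOn_of_partialFractionNumerator_eq_C {s : R}
    (hE : partialFractionNumerator I ω b bL = C (s * ∏ j ∈ I, ω j)) (hs : s ≠ 0)
    (hb : ∀ S ⊆ I, S.Nonempty → ∑ i ∈ S, b i ≠ 0) {i₀ : ι} (hi₀ : i₀ ∈ I) (hωi₀ : ω i₀ ≠ 0) :
    (∀ j ∈ I, ω j ≠ 0) ∧ Set.InjOn ω I := by
  classical
  have hprod : ∏ j ∈ I, ω j ≠ 0 := by
    intro h0
    rw [h0, mul_zero, C_0] at hE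
    have hfiber := mul_sum_fiber_eq_zero_of_partialFractionNumerator_eq_zero hE (ω i₀)
    exact hb _ (filter_subset (ω · = ω i₀) I) ⟨i₀, mem_filter.2 ⟨hi₀, rfl⟩⟩
      ((mul_eq_zero.1 hfiber).resolve_left hωi₀)
  refine ⟨fun j hj => prod_ne_zero_iff.1 hprod j hj, fun i hi j hj hij => ?_⟩
  by_contra hne
  have hroot := eval_partialFractionNumerator_eq_zero_of_eq (b := b) (bL := bL) hi hj hne hij
  rw [hE, eval_C] at hroot
  exact mul_ne_zero hs hprod hroot

end PartialFractions

section Rescaling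

open Polynomial

variable {R S ι : Type*} [CommRing R] [IsDomain R] [CommRing S] [Fintype ι] [DecidableEq ι]
  {x : ι → R} {L : ι} {π : R} {w b : ι → R} {s : R}

theorem rescaled_interpolation (hx : Function.Injective x) (hxL : x L = 1) (hπ : π ≠ 0)
    (hxw : ∀ j ≠ L, x j = π * w j)
    (h : ∀ t, b t * ∏ j ∈ univ.erase t, (x j - x t) = s * ∏ j ∈ univ.erase t, x j) :
    C (b L) * ∏ j ∈ univ.erase L, (C (w j) - X) +
      ∑ i ∈ univ.erase L,
        C (b i * w i) * (1 - C π * X) * ∏ j ∈ (univ.erase L).erase i, (C (w j) - X)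
      = C (s * ∏ j ∈ univ.erase L, w j) := by
  have : Nonempty ι := ⟨L⟩
  set I := univ.erase L
  set P : R[X] := ∏ _j ∈ I, C π
  have hcomp := congrArg (·.comp (C π * X)) (sum_C_mul_prod_C_sub_X_eq_C hx h)
  simp only [Polynomial.sum_comp, mul_comp, C_comp, Polynomial.prod_comp, sub_comp,
    X_comp] at hcomp
  have hfactor (J : Finset ι) (hJ : J ⊆ I) :
      ∏ j ∈ J, (C (x j) - C π * X) = (∏ _j ∈ J, C π) * ∏ j ∈ J, (C (w j) - X) := by
    rw [← prod_mul_distrib]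
    refine prod_congr rfl fun j hj => ?_
    rw [hxw j (ne_of_mem_erase (hJ hj)), C_mul]
    ring
  have hterm (i : ι) (hi : i ∈ I) :
      C (b i * x i) * ∏ j ∈ univ.erase i, (C (x j) - C π * X)
        = P * (C (b i * w i) * (1 - C π * X) * ∏ j ∈ I.erase i, (C (w j) - X)) := by
    have hiL := ne_of_mem_erase hi
    rw [← mul_prod_erase _ _ (mem_erase.2 ⟨Ne.symm hiL, mem_univ L⟩), erase_right_comm,
      hfactor _ (erase_subset _ _), hxL, hxw i hiL, C_1,
      show P = C π * ∏ _j ∈ I.erase i, C π from (mul_prod_erase I (fun _ => C π) hi).symm]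
    simp only [C_mul]
    ring
  have hrhs : C (s * ∏ j, x j) = P * C (s * ∏ j ∈ I, w j) := by
    rw [← mul_prod_erase _ _ (mem_univ L), hxL, one_mul]
    simp only [P, map_mul, map_prod, I]
    rw [prod_congr rfl fun j hj => by rw [hxw j (ne_of_mem_erase hj), C_mul], prod_mul_distrib]
    ring
  rw [← add_sum_erase _ _ (mem_univ L), sum_congr rfl hterm, hxL, mul_one, hfactor I subset_rfl,
    hrhs, ← mul_sum, mul_left_comm, ← mul_add] at hcomp
  exact mul_left_cancel₀ (prod_ne_zero_iff.2 fun _ _ => C_ne_zero.2 hπ) hcomp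

theorem partialFractionNumerator_map_eq_C (φ : R →+* S) (hφπ : φ π = 0)
    (hx : Function.Injective x) (hxL : x L = 1) (hπ : π ≠ 0)
    (hxw : ∀ j ≠ L, x j = π * w j)
    (h : ∀ t, b t * ∏ j ∈ univ.erase t, (x j - x t) = s * ∏ j ∈ univ.erase t, x j) :
    partialFractionNumerator (univ.erase L) (φ ∘ w) (φ ∘ b) (φ (b L))
      = C (φ s * ∏ j ∈ univ.erase L, φ (w j)) := by
  have hmap := congrArg (map φ) (rescaled_interpolation hx hxL hπ hxw h)
  simp only [Polynomial.map_add, Polynomial.map_mul, Polynomial.map_sum, Polynomial.map_prod,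
    Polynomial.map_sub, Polynomial.map_one, map_C, map_X, hφπ, C_0, zero_mul, sub_zero, mul_one,
    map_mul, map_prod] at hmap
  simpa only [partialFractionNumerator, Function.comp_apply, map_mul, map_prod] using hmap

end Rescaling

section DiscreteValuationRing

open IsDiscreteValuationRing (addVal addVal_mul addVal_le_iff_dvd addVal_eq_zero_iff)

variable {R ι : Type*} [CommRing R] [IsDomain R] [IsDiscreteValuationRing R]

theorem addVal_prod (s : Finset ι) (f : ι → R) :
    addVal R (∏ i ∈ s, f i) = ∑ i ∈ s, addVal R (f i) := by
  induction s using Finset.cons_induction with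
  | empty => simp
  | cons a s ha ih => rw [prod_cons, sum_cons, addVal_mul, ih]

variable [Fintype ι] [DecidableEq ι] {x : ι → R} {L : ι} {b : ι → R} {s : R}

theorem addVal_eq_sum_addVal (hxm : ∀ j ≠ L, x j ∈ maximalIdeal R) (hxL : x L = 1)
    (hs : IsUnit s)
    (h : b L * ∏ j ∈ univ.erase L, (x j - x L) = s * ∏ j ∈ univ.erase L, x j) :
    addVal R (b L) = ∑ j ∈ univ.erase L, addVal R (x j) := by
  have hunit : IsUnit (∏ j ∈ univ.erase L, (x j - x L)) := by
    refine IsUnit.prod_iff.2 fun j hj => ?_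
    rw [hxL, ← neg_sub]
    exact (isUnit_one_sub_self_of_mem_nonunits _ (hxm j (ne_of_mem_erase hj))).neg
  have hval := congrArg (addVal R) h
  rwa [addVal_mul, addVal_mul, addVal_eq_zero_iff.2 hunit, addVal_eq_zero_iff.2 hs, add_zero,
    zero_add, addVal_prod] at hval

theorem addVal_eq_and_addVal_sub_eq (hx : Function.Injective x) (hxL : x L = 1)
    (hxm : ∀ j ≠ L, x j ∈ maximalIdeal R) (hs : IsUnit s)
    (hb : ∀ S : Finset ι, S.Nonempty → L ∉ S → IsUnit (∑ j ∈ S, b j))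
    (h : ∀ t, b t * ∏ j ∈ univ.erase t, (x j - x t) = s * ∏ j ∈ univ.erase t, x j) :
    (∀ j k, j ≠ L → k ≠ L → addVal R (x j) = addVal R (x k)) ∧
      (∀ j k, j ≠ L → k ≠ L → j ≠ k → addVal R (x j - x k) = addVal R (x j)) := by
  have hmem (j : ι) (hj : j ≠ L) : j ∈ univ.erase L := mem_erase.2 ⟨hj, mem_univ j⟩
  rcases (univ.erase L).eq_empty_or_nonempty with hI | hI
  · have hL (j : ι) (hj : j ≠ L) : False := by simpa [hI] using hmem j hj
    exact ⟨fun j _ hj => (hL j hj).elim, fun j _ hj => (hL j hj).elim⟩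
  obtain ⟨i₀, hi₀, hmin⟩ := exists_min_image _ (fun j => addVal R (x j)) hI
  have hi₀L := ne_of_mem_erase hi₀
  have hdvd (j : ι) (hj : j ≠ L) : x i₀ ∣ x j := addVal_le_iff_dvd.1 (hmin j (hmem j hj))
  by_cases h0 : x i₀ = 0
  · have hsingle (j : ι) (hj : j ≠ L) : j = i₀ :=
      hx (by rw [h0]; exact zero_dvd_iff.1 (h0 ▸ hdvd j hj))
    exact ⟨fun j k hj hk => by rw [hsingle j hj, hsingle k hk],
      fun j k hj hk hjk => (hjk ((hsingle j hj).trans (hsingle k hk).symm)).elim⟩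
  choose! w hw using hdvd
  have hw₀ : w i₀ = 1 := mul_left_cancel₀ h0 (by rw [← hw i₀ hi₀L, mul_one])
  have hres := partialFractionNumerator_map_eq_C (residue R)
    ((residue_eq_zero_iff _).2 (hxm i₀ hi₀L)) hx hxL h0 hw h
  obtain ⟨hne, hinj⟩ := ne_zero_and_injOn_of_partialFractionNumerator_eq_C hres
    ((residue_ne_zero_iff_isUnit _).2 hs)
    (fun S hS hSne => by
      simpa [← map_sum, residue_ne_zero_iff_isUnit] using
        hb S hSne fun hL => (notMem_erase L univ) (hS hL))
    hi₀ (by simp [hw₀])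
  have hval (j : ι) (hj : j ≠ L) : addVal R (x j) = addVal R (x i₀) := by
    rw [hw j hj, addVal_mul, addVal_eq_zero_iff.2 ((residue_ne_zero_iff_isUnit _).1
      (hne j (hmem j hj))), add_zero]
  refine ⟨fun j k hj hk => by rw [hval j hj, hval k hk], fun j k hj hk hjk => ?_⟩
  have hunit : IsUnit (w j - w k) := by
    rw [← residue_ne_zero_iff_isUnit, map_sub, sub_ne_zero]
    exact fun e => hjk (hinj (hmem j hj) (hmem k hk) e)
  rw [hval j hj, hw j hj, hw k hk, ← mul_sub, addVal_mul, addVal_eq_zero_iff.2 hunit, add_zero]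

end DiscreteValuationRing

theorem stmt15_general {R : Type*} [CommRing R] [IsDomain R] [IsDiscreteValuationRing R]
    (p : ℕ) [CharP (ResidueField R) p]
    (n : ℕ)
    (a : Fin (n + 1) → ℕ)
    (hpsum : ¬ p ∣ ∑ i, a i)
    (hreg : ∀ S : Finset (Fin (n + 1)), S.Nonempty → Fin.last n ∉ S →
      ¬ p ∣ ∑ j ∈ S, a j)
    (x : Fin (n + 1) → R) (hx : Function.Injective x) (hxn : x (Fin.last n) = 1)
    (hxm : ∀ j, j ≠ Fin.last n → x j ∈ maximalIdeal R)
    (heq : ∀ i, (a i : R) * ∏ j ∈ univ.erase i, (x j - x i) =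
      ((∑ j, a j : ℕ) : R) * ∏ j ∈ univ.erase i, x j) :
    (∀ j, j ≠ Fin.last n →
      (n : ℕ∞) * IsDiscreteValuationRing.addVal R (x j) =
        IsDiscreteValuationRing.addVal R ((a (Fin.last n) : R))) ∧
    (∀ j k, j ≠ Fin.last n → k ≠ Fin.last n → j ≠ k →
      IsDiscreteValuationRing.addVal R (x j - x k) =
        IsDiscreteValuationRing.addVal R (x j)) := by
  have hunit (N : ℕ) (hN : ¬ p ∣ N) : IsUnit (N : R) := by
    rw [← residue_ne_zero_iff_isUnit, map_natCast, Ne, CharP.cast_eq_zero_iff _ p]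
    exact hN
  have hb (S : Finset (Fin (n + 1))) (hS : S.Nonempty) (hL : Fin.last n ∉ S) :
      IsUnit (∑ j ∈ S, (a j : R)) := by
    rw [← Nat.cast_sum]
    exact hunit _ (hreg S hS hL)
  obtain ⟨hval, hsub⟩ := addVal_eq_and_addVal_sub_eq hx hxn hxm (hunit _ hpsum) hb heq
  refine ⟨fun j hj => ?_, hsub⟩
  rw [addVal_eq_sum_addVal (b := fun i => (a i : R)) hxm hxn (hunit _ hpsum) (heq _),
    sum_congr rfl fun k hk => hval k j (ne_of_mem_erase hk) hj, sum_const,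
    card_erase_of_mem (mem_univ _), card_univ, Fintype.card_fin, nsmul_eq_mul,
    Nat.add_sub_cancel]

/-- Lemma 8.2 (valuations of the roots of the canonical model): let `R` be a
discrete valuation ring with residue characteristic `p`, and `a₁, …, aₙ` positive
integers with `p ∤ aⱼ` for `j < n`, `p ∤ a₁+⋯+aₙ`, and `p` dividing no subset sum
over nonempty `S ⊆ {1, …, n-1}`. If `x₁, …, xₙ ∈ R` are pairwise distinct with
`xₙ = 1`, `ν(xⱼ) > 0` for `j < n`, and `aᵢ ∏_{j≠i}(xⱼ-xᵢ) = (∑aⱼ) ∏_{j≠i} xⱼ`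
for all `i`, then `(n-1)·ν(xⱼ) = ν(aₙ)` and `ν(xⱼ - x_k) = ν(xⱼ)` for all
distinct `j, k < n`. -/
theorem stmt15 {R : Type*} [CommRing R] [IsDomain R] [IsDiscreteValuationRing R]
    (p : ℕ) (hp : p.Prime) [CharP (ResidueField R) p]
    (n : ℕ) (hn : 0 < n)
    (a : Fin (n + 1) → ℕ) (ha : ∀ i, 0 < a i)
    (hpa : ∀ j, j ≠ Fin.last n → ¬ p ∣ a j) (hpsum : ¬ p ∣ ∑ i, a i)
    (hreg : ∀ S : Finset (Fin (n + 1)), S.Nonempty → Fin.last n ∉ S →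
      ¬ p ∣ ∑ j ∈ S, a j)
    (x : Fin (n + 1) → R) (hx : Function.Injective x) (hxn : x (Fin.last n) = 1)
    (hxm : ∀ j, j ≠ Fin.last n → x j ∈ maximalIdeal R)
    (heq : ∀ i, (a i : R) * ∏ j ∈ univ.erase i, (x j - x i) =
      ((∑ j, a j : ℕ) : R) * ∏ j ∈ univ.erase i, x j) :
    (∀ j, j ≠ Fin.last n →
      (n : ℕ∞) * IsDiscreteValuationRing.addVal R (x j) =
        IsDiscreteValuationRing.addVal R ((a (Fin.last n) : R))) ∧
    (∀ j k, j ≠ Fin.last n → k ≠ Fin.last n → j ≠ k →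
      IsDiscreteValuationRing.addVal R (x j - x k) =
        IsDiscreteValuationRing.addVal R (x j)) :=
  stmt15_general p n a hpsum hreg x hx hxn hxm heq
end
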